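/- Let x ∈ ℝ^d be nonzero, y ∈ {1,…,C}, α > 0, and consider the squared-error objective ℓ(J) = ‖J x − e_y‖₂² over matrices J ∈ ℝ^{C×d} with ‖J‖_F² ≤ α. Then the matrix J* = β e_y xᵀ with β = min(√α/‖x‖₂, 1/‖x‖₂²) minimizes ℓ over the constraint set; in particular the minimizer has row y proportional to x and all other rows zero. -/

import Mathlib

/-- Euclidean norm of a vector in `ℝ^d`. -/
noncomputable def norm2 {d : ℕ} (v : Fin d → ℝ) : ℝ := Real.sqrt (∑ j, (v j) ^ 2)

/-- Squared Frobenius norm of a matrix. -/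
def frobSq {C d : ℕ} (J : Matrix (Fin C) (Fin d) ℝ) : ℝ := ∑ i, ∑ j, (J i j) ^ 2

/-!
The loss of `J` is at least its `y`-th term `(t - 1)²`, where `t = (J x)_y` satisfies
`|t| ≤ ‖J‖_F ‖x‖₂ ≤ √α ‖x‖₂` by Cauchy–Schwarz. Over this range `(t - 1)²` is smallest at
`t = min(√α ‖x‖₂, 1) = β ‖x‖₂²`, and `β e_y xᵀ` attains exactly this value with all other
residuals zero, while its Frobenius norm is `β ‖x‖₂ ≤ √α`.
-/

open Matrix Finset

theorem norm2_sq {d : ℕ} (v : Fin d → ℝ) : norm2 v ^ 2 = ∑ j, v j ^ 2 :=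
  Real.sq_sqrt (sum_nonneg fun _ _ => sq_nonneg _)

theorem frobSq_vecMulVec {C d : ℕ} (c : Fin C → ℝ) (x : Fin d → ℝ) :
    frobSq (vecMulVec c x) = (∑ i, c i ^ 2) * ∑ j, x j ^ 2 := by
  simp only [frobSq, vecMulVec_apply, mul_pow, ← mul_sum, sum_mul]

theorem vecMulVec_mulVec_self {C d : ℕ} (c : Fin C → ℝ) (x : Fin d → ℝ) :
    vecMulVec c x *ᵥ x = fun i => (∑ j, x j ^ 2) * c i := by
  ext i
  simp [vecMulVec_mulVec, dotProduct, sq, mul_comm]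

theorem sq_mulVec_apply_le_frobSq_mul {C d : ℕ} (J : Matrix (Fin C) (Fin d) ℝ)
    (x : Fin d → ℝ) (i : Fin C) : (J *ᵥ x) i ^ 2 ≤ frobSq J * ∑ j, x j ^ 2 :=
  calc (J *ᵥ x) i ^ 2 ≤ (∑ j, J i j ^ 2) * ∑ j, x j ^ 2 :=
        sum_mul_sq_le_sq_mul_sq univ (J i) x
    _ ≤ frobSq J * ∑ j, x j ^ 2 := by
      gcongr
      exact single_le_sum (f := fun i => ∑ j, J i j ^ 2)
        (fun _ _ => sum_nonneg fun _ _ => sq_nonneg _) (mem_univ i)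

section Indicator

variable {ι : Type*} [Fintype ι] [DecidableEq ι]

theorem sum_sq_mul_indicator (r : ℝ) (y : ι) :
    ∑ a, (r * if a = y then 1 else 0) ^ 2 = r ^ 2 := by
  simp

theorem sum_sq_mul_indicator_sub_indicator (r : ℝ) (y : ι) :
    ∑ a, (r * (if a = y then 1 else 0) - if a = y then 1 else 0) ^ 2 = (r - 1) ^ 2 := by
  rw [Fintype.sum_eq_single y fun a ha => by simp [ha]]
  simp

theorem sq_sub_one_le_sum_sq_sub_indicator (v : ι → ℝ) (y : ι) :
    (v y - 1) ^ 2 ≤ ∑ a, (v a - if a = y then 1 else 0) ^ 2 := by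
  simpa using single_le_sum (f := fun a => (v a - if a = y then 1 else 0) ^ 2)
    (fun _ _ => sq_nonneg _) (mem_univ y)

end Indicator

theorem sq_min_sub_one_le_sq_sub_one {t r : ℝ} (hr : 0 ≤ r) (ht : t ^ 2 ≤ r ^ 2) :
    (min r 1 - 1) ^ 2 ≤ (t - 1) ^ 2 := by
  have htr : t ≤ r := (abs_le_of_sq_le_sq' ht hr).2
  rcases le_total r 1 with h | h
  · rw [min_eq_left h]
    nlinarith
  · rw [min_eq_right h, sub_self, sq, zero_mul]
    exact sq_nonneg _

-- Also true at `n = 0`, where both sides vanish because `a / 0 = 0`.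
theorem min_div_one_div_sq_mul_sq {a n : ℝ} (hn : 0 ≤ n) :
    min (a / n) (1 / n ^ 2) * n ^ 2 = min (a * n) 1 := by
  rcases hn.eq_or_lt with rfl | hn
  · simp
  · rw [min_mul_of_nonneg _ _ (by positivity)]
    field_simp

theorem min_div_mul_le {a b c : ℝ} (ha : 0 ≤ a) (hb : 0 ≤ b) : min (a / b) c * b ≤ a := by
  rcases hb.eq_or_lt with rfl | hb
  · simpa using ha
  · calc min (a / b) c * b ≤ a / b * b := by gcongr; exact min_le_left _ _
      _ = a := div_mul_cancel₀ a hb.ne'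

theorem stmt2_general {C d : ℕ} (x : Fin d → ℝ) (y : Fin C) (α : ℝ) (hα : 0 < α)
    (β : ℝ) (hβ : β = min (Real.sqrt α / norm2 x) (1 / (norm2 x) ^ 2))
    (Jstar : Matrix (Fin C) (Fin d) ℝ)
    (hJstar : Jstar = Matrix.vecMulVec (fun i => β * (if i = y then 1 else 0)) x) :
    frobSq Jstar ≤ α ∧
    ∀ J : Matrix (Fin C) (Fin d) ℝ, frobSq J ≤ α →
      ∑ a, (Jstar.mulVec x a - (if a = y then 1 else 0)) ^ 2 ≤
        ∑ a, (J.mulVec x a - (if a = y then 1 else 0)) ^ 2 := by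
  have hn : 0 ≤ norm2 x := Real.sqrt_nonneg _
  have hβ0 : 0 ≤ β := hβ ▸ le_min (by positivity) (by positivity)
  refine ⟨?_, fun J hJ => ?_⟩
  · have hβn : β * norm2 x ≤ √α := hβ ▸ min_div_mul_le (Real.sqrt_nonneg α) hn
    calc frobSq Jstar = (β * norm2 x) ^ 2 := by
          rw [hJstar, frobSq_vecMulVec, sum_sq_mul_indicator, ← norm2_sq, mul_pow]
      _ ≤ √α ^ 2 := by gcongr
      _ = α := Real.sq_sqrt hα.le
  · have hJx : Jstar *ᵥ x = fun a => β * norm2 x ^ 2 * if a = y then 1 else 0 := by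
      rw [hJstar, vecMulVec_mulVec_self, ← norm2_sq]
      ext a
      ring
    have hCauchySchwarz : (J *ᵥ x) y ^ 2 ≤ (√α * norm2 x) ^ 2 :=
      calc (J *ᵥ x) y ^ 2 ≤ frobSq J * norm2 x ^ 2 :=
            norm2_sq x ▸ sq_mulVec_apply_le_frobSq_mul J x y
        _ ≤ α * norm2 x ^ 2 := by gcongr
        _ = (√α * norm2 x) ^ 2 := by rw [mul_pow, Real.sq_sqrt hα.le]
    rw [hJx, sum_sq_mul_indicator_sub_indicator, hβ, min_div_one_div_sq_mul_sq hn]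
    exact (sq_min_sub_one_le_sq_sub_one (by positivity) hCauchySchwarz).trans
      (sq_sub_one_le_sum_sq_sub_indicator _ y)

/-- for nonzero `x`, a class `y`, and `α > 0`, the matrix
`J* = β e_y xᵀ` with `β = min(√α/‖x‖₂, 1/‖x‖₂²)` minimizes the squared-error objective
`‖J x − e_y‖₂²` over the constraint set `‖J‖_F² ≤ α`. -/
theorem stmt2 {C d : ℕ} (x : Fin d → ℝ) (hx : x ≠ 0) (y : Fin C) (α : ℝ) (hα : 0 < α)
    (β : ℝ) (hβ : β = min (Real.sqrt α / norm2 x) (1 / (norm2 x) ^ 2))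
    (Jstar : Matrix (Fin C) (Fin d) ℝ)
    (hJstar : Jstar = Matrix.vecMulVec (fun i => β * (if i = y then 1 else 0)) x) :
    frobSq Jstar ≤ α ∧
    ∀ J : Matrix (Fin C) (Fin d) ℝ, frobSq J ≤ α →
      ∑ a, (Jstar.mulVec x a - (if a = y then 1 else 0)) ^ 2 ≤
        ∑ a, (J.mulVec x a - (if a = y then 1 else 0)) ^ 2 :=
  stmt2_general x y α hα β hβ Jstar hJstar
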